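/- arXiv:math/9805001 — 2 statements merged into one kernel-verified Lean document; each statement's English description precedes it below -/
import Mathlib

section
/- Let h be a real number with h ≠ −k/2 for every integer k ≥ 0. Then the q_R-conformal symmetries satisfy the Witt algebra relations on each half: [L_n, L_m] = (n − m)·L_{n+m} on ℂ[z] whenever n, m ≥ −1, and also whenever n, m ≤ 1. -/
/-!
For `k ≥ 0` the mode `L_k = z Dᵏ⁺¹ + (k+1)h Dᵏ` factors as `(E + (k+1)h) Dᵏ` with `E = z D` the
Euler operator, and `Dᵏ E = (E + k) Dᵏ`. Hence `L_a L_b = (E + (a+1)h)(E + a + (b+1)h) D^{a+b}`,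
and the relations among nonnegative modes become a quadratic identity in `E`; the same
commutation rule gives `[L_a, z] = (a+1) L_{a-1}` with `z = L₋₁`.

The modes `L₋ₖ`, `k ≥ 0` (including `L₀`), are weighted shifts `zⁿ ↦ c_k(n) zⁿ⁺ᵏ`, so their
commutators are again weighted shifts and the relations reduce to identities between the
coefficients. In `c_k(n) c_j(n+k)` the rising products in the denominators telescope to the
one of `c_{j+k}(n)`, and nondegeneracy of `h` keeps every denominator nonzero. The only other
mixed relation, `[L₁, L₋ₖ] = (k+1) L_{1-k}`, is checked on monomials in the same way.
-/

open Polynomial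

noncomputable section

/-- Operators (ℂ-linear endomorphisms) on ℂ[z], realized as `Polynomial ℂ`. -/
abbrev E : Type := Module.End ℂ (Polynomial ℂ)

/-- The differentiation operator `D(p) = p'`. -/
def Dop : E := Polynomial.derivative

/-- Multiplication by `z`. -/
def Mz : E := LinearMap.mulLeft ℂ (X : Polynomial ℂ)

/-- `l₋₁(p) = z·p`. -/
def lm1 : E := Mz

/-- `l₀(p) = z·p' + h·p`. -/
def l0 (h : ℝ) : E := Mz * Dop + (h : ℂ) • (1 : E)

/-- `l₁(p) = z·p'' + 2h·p'`. -/
def l1 (h : ℝ) : E := Mz * Dop ^ 2 + ((2 * h : ℝ) : ℂ) • Dop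

/-- Commutator `[A,B] = A∘B − B∘A`. -/
def opComm (A B : E) : E := A * B - B * A

/-- The weight `w h n = n!·(2h)(2h+1)⋯(2h+n−1)`, i.e. the squared norm `⟨zⁿ, zⁿ⟩`
in the unitarizable Verma module. -/
def w (h : ℝ) (n : ℕ) : ℝ := (n.factorial : ℝ) * ∏ i ∈ Finset.range n, (2 * h + (i : ℝ))

lemma ext_X_pow {A B : E} (hAB : ∀ n : ℕ, A (X ^ n) = B (X ^ n)) : A = B := by
  refine Polynomial.lhom_ext' fun n => LinearMap.ext_ring ?_
  simpa [Polynomial.monomial_one_right_eq_X_pow] using hAB n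

lemma opComm_swap (A B : E) : opComm B A = -opComm A B := by
  rw [opComm, opComm, neg_sub]

lemma Mz_X_pow (n : ℕ) : Mz (X ^ n : ℂ[X]) = X ^ (n + 1) := by
  rw [Mz, LinearMap.mulLeft_apply, pow_succ']

lemma Dop_X_pow_succ (n : ℕ) : Dop (X ^ (n + 1) : ℂ[X]) = ((n : ℂ) + 1) • X ^ n := by
  rw [Dop, derivative_X_pow_succ, smul_eq_C_mul]

lemma Dop_one : Dop (1 : ℂ[X]) = 0 := derivative_one

def euler : E := Mz * Dop

lemma euler_X_pow (n : ℕ) : euler (X ^ n : ℂ[X]) = (n : ℂ) • X ^ n := by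
  cases n with
  | zero => simp [euler, Dop_one]
  | succ n => simp [euler, Dop_X_pow_succ, Mz_X_pow]

lemma Dop_mul_Mz : Dop * Mz = Mz * Dop + 1 := by
  refine LinearMap.ext fun p => ?_
  simp [Dop, Mz, derivative_mul, mul_comm]

lemma Dop_pow_mul_euler (k : ℕ) : Dop ^ k * euler = (euler + (k : ℂ) • 1) * Dop ^ k := by
  induction k with
  | zero => simp
  | succ k ih =>
    calc Dop ^ (k + 1) * euler = Dop ^ k * (Dop * Mz) * Dop := by
          rw [euler, pow_succ]; noncomm_ring
      _ = (Dop ^ k * euler + Dop ^ k) * Dop := by rw [Dop_mul_Mz, euler]; noncomm_ring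
      _ = (euler + ((k + 1 : ℕ) : ℂ) • 1) * Dop ^ (k + 1) := by
          rw [ih, pow_succ, ← mul_assoc]
          simp only [add_mul, smul_mul_assoc, one_mul]
          push_cast
          module

lemma Dop_pow_succ_mul_Mz (k : ℕ) :
    Dop ^ (k + 1) * Mz = Mz * Dop ^ (k + 1) + ((k : ℂ) + 1) • Dop ^ k := by
  induction k with
  | zero => simpa using Dop_mul_Mz
  | succ k ih =>
    rw [pow_succ', mul_assoc, ih, mul_add, ← mul_assoc, Dop_mul_Mz, mul_smul_comm, add_mul,
      one_mul, mul_assoc, ← pow_succ', ← pow_succ']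
    push_cast
    module

lemma Dop_pow_mul_euler_add (k : ℕ) (c : ℂ) :
    Dop ^ k * (euler + c • 1) = (euler + ((k : ℂ) + c) • 1) * Dop ^ k := by
  rw [mul_add, Dop_pow_mul_euler, mul_smul_comm, mul_one, add_smul, ← add_assoc]
  simp only [add_mul, smul_mul_assoc, one_mul]

/-- The mode `L_k`, `k ≥ 0`. -/
def posMode (h : ℝ) (k : ℕ) : E := (euler + (((k : ℂ) + 1) * h) • 1) * Dop ^ k

lemma posMode_eq (h : ℝ) (k : ℕ) :
    posMode h k = Mz * Dop ^ (k + 1) + (((k : ℂ) + 1) * (h : ℂ)) • Dop ^ k := by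
  rw [posMode, euler, add_mul, smul_mul_assoc, one_mul, mul_assoc, ← pow_succ']

lemma posMode_mul_posMode (h : ℝ) (a b : ℕ) :
    posMode h a * posMode h b = (euler + (((a : ℂ) + 1) * h) • 1) *
      (euler + ((a : ℂ) + ((b : ℂ) + 1) * h) • 1) * Dop ^ (a + b) := by
  rw [posMode, posMode, mul_assoc, ← mul_assoc (Dop ^ a), Dop_pow_mul_euler_add, pow_add]
  noncomm_ring

lemma opComm_posMode (h : ℝ) (a b : ℕ) :
    opComm (posMode h a) (posMode h b) = ((a : ℂ) - b) • posMode h (a + b) := by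
  rw [opComm, posMode_mul_posMode, posMode_mul_posMode, add_comm b a, ← sub_mul, posMode,
    ← smul_mul_assoc]
  congr 1
  simp only [mul_add, add_mul, smul_mul_assoc, mul_smul_comm, one_mul, mul_one]
  push_cast
  module

lemma opComm_posMode_Mz (h : ℝ) (s : ℕ) :
    opComm (posMode h (s + 1)) Mz = ((s : ℂ) + 2) • posMode h s := by
  rw [opComm, posMode_eq, posMode_eq]
  simp only [add_mul, mul_add, smul_mul_assoc, mul_smul_comm, mul_assoc, Dop_pow_succ_mul_Mz]
  push_cast
  module

lemma posMode_zero_X_pow (h : ℝ) (n : ℕ) : posMode h 0 (X ^ n) = ((n : ℂ) + h) • X ^ n := by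
  simp [posMode, euler_X_pow, add_smul]

lemma posMode_one_one (h : ℝ) : posMode h 1 1 = 0 := by
  simp [posMode, Dop_one]

lemma posMode_one_X_pow_succ (h : ℝ) (n : ℕ) :
    posMode h 1 (X ^ (n + 1)) = (((n : ℂ) + 1) * (n + 2 * h)) • X ^ n := by
  simp only [posMode, Module.End.mul_apply, pow_one, Dop_X_pow_succ, LinearMap.add_apply,
    LinearMap.smul_apply, map_smul, euler_X_pow, Module.End.one_apply, smul_smul, ← add_smul]
  congr 1
  push_cast
  ring

lemma opComm_apply_X_pow_of_shift {A B : E} {a b : ℕ → ℂ} {j k : ℕ}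
    (hA : ∀ n, A (X ^ n) = a n • X ^ (n + j)) (hB : ∀ n, B (X ^ n) = b n • X ^ (n + k))
    (n : ℕ) :
    opComm A B (X ^ n) = (b n * a (n + k) - a n * b (n + j)) • X ^ (n + (j + k)) := by
  rw [opComm, LinearMap.sub_apply, Module.End.mul_apply, Module.End.mul_apply, hB, map_smul,
    hA, hA, map_smul, hB, smul_smul, smul_smul, sub_smul, add_assoc, add_assoc, add_comm k j]

/-- `L₋ₖ(zⁿ) = negCoeff h k n • zⁿ⁺ᵏ`. -/
def negCoeff (h : ℝ) (k n : ℕ) : ℂ :=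
  ((n : ℂ) + ((k : ℂ) + 1) * (h : ℂ)) / ∏ i ∈ Finset.range k, ((n : ℂ) + 2 * h + (i : ℂ))

lemma negCoeff_zero (h : ℝ) (n : ℕ) : negCoeff h 0 n = n + h := by
  simp [negCoeff]

lemma prod_range_mul_prod_range (h : ℝ) (n k j : ℕ) :
    (∏ i ∈ Finset.range k, ((n : ℂ) + 2 * h + i)) *
      ∏ i ∈ Finset.range j, (((n + k : ℕ) : ℂ) + 2 * h + i) =
    ∏ i ∈ Finset.range (k + j), ((n : ℂ) + 2 * h + i) := by
  rw [Finset.prod_range_add]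
  congr 1
  refine Finset.prod_congr rfl fun i _ => ?_
  push_cast
  ring

lemma negCoeff_mul_sub (h : ℝ) (j k n : ℕ) :
    negCoeff h k n * negCoeff h j (n + k) - negCoeff h j n * negCoeff h k (n + j) =
      ((k : ℂ) - j) * negCoeff h (j + k) n := by
  rw [negCoeff, negCoeff, negCoeff, negCoeff, negCoeff, div_mul_div_comm, div_mul_div_comm,
    prod_range_mul_prod_range, prod_range_mul_prod_range, add_comm k j, div_sub_div_same,
    ← mul_div_assoc]
  congr 1
  push_cast
  ring

section Nondegenerate

variable {h : ℝ} (hh : ∀ n : ℕ, (n : ℂ) + 2 * h ≠ 0)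
include hh

lemma prod_ne_zero_of_nondegenerate (n k : ℕ) :
    ∏ i ∈ Finset.range k, ((n : ℂ) + 2 * h + i) ≠ 0 :=
  Finset.prod_ne_zero_iff.2 fun i _ => by simpa [add_right_comm] using hh (n + i)

lemma negCoeff_one (n : ℕ) : negCoeff h 1 n = 1 := by
  rw [negCoeff, Finset.prod_range_one, div_eq_one_iff_eq (by simpa using hh n)]
  push_cast
  ring

lemma negCoeff_succ_zero_mul (r : ℕ) :
    negCoeff h (r + 1) 0 * (((r : ℂ) + 1) * (r + 2 * h)) = ((r : ℂ) + 2) * negCoeff h r 0 := by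
  have hP := prod_ne_zero_of_nondegenerate hh 0 r
  have hlast : ((0 : ℕ) : ℂ) + 2 * h + r = r + 2 * h := by push_cast; ring
  rw [negCoeff, negCoeff, Finset.prod_range_succ, hlast]
  generalize ∏ i ∈ Finset.range r, (((0 : ℕ) : ℂ) + 2 * h + i) = P at hP ⊢
  have hq := hh r
  generalize (r : ℂ) + 2 * h = q at hq ⊢
  push_cast
  field_simp
  ring

lemma negCoeff_succ_mul_sub (r t : ℕ) :
    negCoeff h (r + 1) (t + 1) * (((t + r : ℂ) + 2) * ((t + r : ℂ) + 1 + 2 * h)) -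
      (((t : ℂ) + 1) * (t + 2 * h)) * negCoeff h (r + 1) t =
    ((r : ℂ) + 2) * negCoeff h r (t + 1) := by
  have hP := prod_ne_zero_of_nondegenerate hh (t + 1) r
  have hlast : ((t + 1 : ℕ) : ℂ) + 2 * h + r = (t + r : ℂ) + 1 + 2 * h := by push_cast; ring
  have hq : (t + r : ℂ) + 1 + 2 * h ≠ 0 := by simpa [add_right_comm] using hh (t + r + 1)
  have hp := hh t
  have hsplit : ∏ i ∈ Finset.range (r + 1), ((t : ℂ) + 2 * h + i) =
      ((t : ℂ) + 2 * h) * ∏ i ∈ Finset.range r, (((t + 1 : ℕ) : ℂ) + 2 * h + i) := by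
    rw [add_comm r 1, ← prod_range_mul_prod_range, Finset.prod_range_one, Nat.cast_zero, add_zero]
  rw [negCoeff, negCoeff, negCoeff, Finset.prod_range_succ _ r, hsplit, hlast]
  generalize ∏ i ∈ Finset.range r, (((t + 1 : ℕ) : ℂ) + 2 * h + i) = P at hP ⊢
  generalize (t + r : ℂ) + 1 + 2 * h = q at hq ⊢
  generalize (t : ℂ) + 2 * h = p at hp ⊢
  push_cast
  field_simp
  ring

end Nondegenerate

def WittRel (L : ℤ → E) (n m : ℤ) : Prop := opComm (L n) (L m) = ((n - m : ℤ) : ℂ) • L (n + m)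

section Witt

variable {h : ℝ} {L : ℤ → E}

lemma WittRel.symm {n m : ℤ} (hnm : WittRel L n m) : WittRel L m n := by
  rw [WittRel, opComm_swap, hnm, add_comm n m]
  push_cast
  module

lemma wittRel_natCast (hpos : ∀ k : ℕ, L k = posMode h k) (a b : ℕ) : WittRel L a b := by
  rw [WittRel, ← Nat.cast_add, hpos, hpos, hpos, opComm_posMode]
  push_cast
  rfl

lemma wittRel_neg (hneg : ∀ k n : ℕ, L (-k) (X ^ n) = negCoeff h k n • X ^ (n + k))
    (j k : ℕ) : WittRel L (-j) (-k) := by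
  refine ext_X_pow fun n => ?_
  rw [opComm_apply_X_pow_of_shift (hneg j) (hneg k), ← neg_add, ← Nat.cast_add,
    LinearMap.smul_apply, hneg, smul_smul, negCoeff_mul_sub]
  congr 1
  push_cast
  ring

lemma wittRel_succ_neg_one (hpos : ∀ k : ℕ, L k = posMode h k) (hm1 : L (-1) = Mz) (s : ℕ) :
    WittRel L (s + 1 : ℕ) (-1) := by
  rw [WittRel, hm1, hpos, opComm_posMode_Mz, show ((s + 1 : ℕ) : ℤ) + -1 = s by push_cast; ring,
    hpos]
  congr 1
  push_cast
  ring

variable (hh : ∀ n : ℕ, (n : ℂ) + 2 * h ≠ 0)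
include hh

lemma neg_one_eq_Mz (hneg : ∀ k n : ℕ, L (-k) (X ^ n) = negCoeff h k n • X ^ (n + k)) :
    L (-1) = Mz :=
  ext_X_pow fun n => by simpa [negCoeff_one hh, Mz_X_pow] using hneg 1 n

lemma wittRel_one_neg (hpos : ∀ k : ℕ, L k = posMode h k)
    (hneg : ∀ k n : ℕ, L (-k) (X ^ n) = negCoeff h k n • X ^ (n + k)) (r : ℕ) :
    WittRel L 1 (-(r + 1 : ℕ)) := by
  have hL1 : L 1 = posMode h 1 := by exact_mod_cast hpos 1
  unfold WittRel
  refine ext_X_pow fun n => ?_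
  rw [show (1 : ℤ) + -((r + 1 : ℕ) : ℤ) = -(r : ℤ) by push_cast; ring, opComm,
    LinearMap.sub_apply, Module.End.mul_apply, Module.End.mul_apply, LinearMap.smul_apply,
    hneg, hneg, map_smul, smul_smul, hL1]
  obtain _ | t := n
  · rw [pow_zero, posMode_one_one, map_zero, sub_zero, zero_add, posMode_one_X_pow_succ,
      smul_smul, zero_add]
    congr 1
    push_cast
    linear_combination negCoeff_succ_zero_mul hh r
  · rw [show t + 1 + (r + 1) = t + r + 1 + 1 by ring, posMode_one_X_pow_succ,
      posMode_one_X_pow_succ, map_smul, hneg, smul_smul, smul_smul,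
      show t + (r + 1) = t + r + 1 by ring, show t + 1 + r = t + r + 1 by ring, ← sub_smul]
    congr 1
    push_cast
    linear_combination negCoeff_succ_mul_sub hh r t

lemma wittRel_natCast_neg (hpos : ∀ k : ℕ, L k = posMode h k)
    (hneg : ∀ k n : ℕ, L (-k) (X ^ n) = negCoeff h k n • X ^ (n + k))
    (a k : ℕ) (hak : a ≤ 1 ∨ k ≤ 1) : WittRel L a (-k) := by
  obtain _ | _ | s := a
  · simpa using wittRel_neg hneg 0 k
  · obtain _ | r := k
    · simpa using wittRel_natCast hpos 1 0
    · exact_mod_cast wittRel_one_neg hh hpos hneg r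
  · obtain _ | _ | k := k
    · simpa [add_assoc] using wittRel_natCast hpos (s + 2) 0
    · simpa using wittRel_succ_neg_one hpos (neg_one_eq_Mz hh hneg) (s + 1)
    · omega

end Witt

/-- For nondegenerate extremal weight `h`, the q_R-conformal symmetries satisfy
the Witt relations on each half: `[Lₙ, Lₘ] = (n − m)·L_{n+m}` whenever `n, m ≥ −1`, and also
whenever `n, m ≤ 1`. -/
theorem stmt_7 (h : ℝ) (hh : ∀ k : ℕ, h ≠ -(k : ℝ) / 2)
    (L : ℤ → E)
    (hLpos : ∀ k : ℕ, L (k : ℤ) = Mz * Dop ^ (k + 1) + (((k : ℂ) + 1) * (h : ℂ)) • Dop ^ k)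
    (hLneg : ∀ k : ℕ, 1 ≤ k → ∀ n : ℕ,
      L (-(k : ℤ)) (X ^ n) =
        (((n : ℂ) + ((k : ℂ) + 1) * (h : ℂ)) /
            ∏ i ∈ Finset.range k, ((n : ℂ) + 2 * h + (i : ℂ))) • X ^ (n + k))
    :
    ∀ n m : ℤ, ((-1 ≤ n ∧ -1 ≤ m) ∨ (n ≤ 1 ∧ m ≤ 1)) →
      opComm (L n) (L m) = ((n - m : ℤ) : ℂ) • L (n + m) := by
  have hnz : ∀ n : ℕ, (n : ℂ) + 2 * h ≠ 0 := by
    intro n hn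
    apply hh n
    have : (n : ℝ) + 2 * h = 0 := by exact_mod_cast hn
    linarith
  have hpos : ∀ k : ℕ, L k = posMode h k := fun k => (hLpos k).trans (posMode_eq h k).symm
  have hneg : ∀ k n : ℕ, L (-k) (X ^ n) = negCoeff h k n • X ^ (n + k) := by
    rintro (_ | k) n
    · have hL0 := hpos 0
      rw [Nat.cast_zero] at hL0
      simp [hL0, posMode_zero_X_pow, negCoeff_zero]
    · exact hLneg (k + 1) k.succ_pos n
  intro n m hnm
  obtain ⟨a, rfl | rfl⟩ := Int.eq_nat_or_neg n <;> obtain ⟨b, rfl | rfl⟩ := Int.eq_nat_or_neg m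
  · exact wittRel_natCast hpos a b
  · exact wittRel_natCast_neg hnz hpos hneg a b (by omega)
  · exact (wittRel_natCast_neg hnz hpos hneg b a (by omega)).symm
  · exact wittRel_neg hneg a b

end
end

section
/- Let h > 0. Then adjoining the tensor operators J_m to the q_R-conformal symmetries gives an HS-projective representation of the semidirect sum of the Witt algebra with the infinite-dimensional ℤ-graded Heisenberg algebra: for all n, m ∈ ℤ, both defect operators [J_n, J_m] and [L_n, J_m] + m·J_{n+m} on ℂ[z] are Hilbert–Schmidt with respect to the orthogonal monomial basis, i.e. Σ_{k≥0} ‖[J_n, J_m](z^k)‖² / ‖z^k‖² and Σ_{k≥0} ‖([L_n, J_m] + m·J_{n+m})(z^k)‖² / ‖z^k‖² both converge. -/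
open Polynomial

noncomputable section

/-!
For large `k`, every operator involved is a weighted shift `X ^ k ↦ c k • X ^ (k + σ)`, and the
Hilbert–Schmidt sum of such a shift is `∑ c(k)² w(k + σ) / w(k)` with `w(k + σ) / w(k) = O(k^{2σ})`;
so it converges once `c(x) = O(x^{-σ-1})`. `Jₘ` shifts by `-m` with coefficients
`xᵐ + b xᵐ⁻¹ + O(xᵐ⁻²)` and `Lₙ` by `-n` with coefficients `xⁿ⁺¹ + b' xⁿ + O(xⁿ⁻¹)`.
In the commutator of shifts by `σ`, `τ` with such coefficients of orders `p`, `q`, the leading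
terms cancel and so do `b`, `b'`; what is left, `(p τ - q σ) x^{p+q-1}`, comes from evaluating
each coefficient at an argument shifted by the other operator. It vanishes for `[Jₙ, Jₘ]` and is
`-m xⁿ⁺ᵐ` for `[Lₙ, Jₘ]`, which `m J_{n+m}` cancels. Both defects are therefore shifts by
`-(n + m)` with coefficients `O(xⁿ⁺ᵐ⁻¹)`.
-/
open Filter Asymptotics

lemma isLittleO_zpow_zpow_atTop {p q : ℤ} (hpq : p < q) :
    (fun x : ℝ => x ^ p) =o[atTop] fun x => x ^ q := by
  rw [isLittleO_iff_tendsto']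
  · refine (tendsto_zpow_atTop_zero (by omega : p - q < 0)).congr' ?_
    filter_upwards [eventually_gt_atTop 0] with x hx
    rw [zpow_sub₀ hx.ne']
  · filter_upwards [eventually_gt_atTop 0] with x hx h0
    exact absurd h0 (zpow_ne_zero _ hx.ne')

lemma isBigO_zpow_zpow_atTop {p q : ℤ} (hpq : p ≤ q) :
    (fun x : ℝ => x ^ p) =O[atTop] fun x => x ^ q := by
  rcases hpq.eq_or_lt with rfl | h
  · exact isBigO_refl _ _
  · exact (isLittleO_zpow_zpow_atTop h).isBigO

lemma Asymptotics.IsBigO.mul_zpow {f g : ℝ → ℝ} {p q : ℤ}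
    (hf : f =O[atTop] fun x => x ^ p) (hg : g =O[atTop] fun x => x ^ q) :
    (fun x => f x * g x) =O[atTop] fun x => x ^ (p + q) := by
  refine (hf.mul hg).congr' (by rfl) ?_
  filter_upwards [eventually_gt_atTop 0] with x hx
  rw [zpow_add₀ hx.ne']

def HasExpansion (f : ℝ → ℝ) (p : ℤ) (a b : ℝ) : Prop :=
  (fun x => f x - (a * x ^ p + b * x ^ (p - 1))) =O[atTop] fun x => x ^ (p - 2)

lemma hasExpansion_zero_zero_iff {f : ℝ → ℝ} {p : ℤ} :
    HasExpansion f p 0 0 ↔ f =O[atTop] fun x => x ^ (p - 2) := by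
  simp [HasExpansion]

lemma hasExpansion_const (c : ℝ) : HasExpansion (fun _ => c) 0 c 0 := by
  simpa [HasExpansion] using isBigO_zero _ _

lemma hasExpansion_add_const (σ : ℝ) : HasExpansion (fun x => x + σ) 1 1 σ := by
  simpa [HasExpansion] using isBigO_zero _ _

namespace HasExpansion

variable {f g : ℝ → ℝ} {p q : ℤ} {a b a' b' : ℝ}

lemma congr_coeff (hf : HasExpansion f p a b) {p' : ℤ} {a'' b'' : ℝ} (hp : p = p')
    (ha : a = a'') (hb : b = b'') : HasExpansion f p' a'' b'' := by
  subst hp ha hb; exact hf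

lemma congr_left (hf : HasExpansion f p a b) (hfg : ∀ x, f x = g x) : HasExpansion g p a b :=
  IsBigO.congr_left hf fun x => by rw [hfg]

lemma isBigO (hf : HasExpansion f p a b) : f =O[atTop] fun x => x ^ p := by
  have hlead : (fun x : ℝ => a * x ^ p + b * x ^ (p - 1)) =O[atTop] fun x => x ^ p :=
    ((isBigO_refl _ _).const_mul_left a).add
      ((isBigO_zpow_zpow_atTop (by omega)).const_mul_left b)
  exact ((hf.trans (isBigO_zpow_zpow_atTop (by omega))).add hlead).congr_left
    fun x => sub_add_cancel _ _

lemma add (hf : HasExpansion f p a b) (hg : HasExpansion g p a' b') :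
    HasExpansion (fun x => f x + g x) p (a + a') (b + b') :=
  (IsBigO.add hf hg).congr_left fun x => by ring

lemma sub (hf : HasExpansion f p a b) (hg : HasExpansion g p a' b') :
    HasExpansion (fun x => f x - g x) p (a - a') (b - b') :=
  (IsBigO.sub hf hg).congr_left fun x => by ring

lemma const_mul (hf : HasExpansion f p a b) (c : ℝ) :
    HasExpansion (fun x => c * f x) p (c * a) (c * b) :=
  (hf.const_mul_left c).congr_left fun x => by ring

lemma lift (hf : HasExpansion f p a b) : HasExpansion f (p + 1) 0 a := by
  have := hf.trans (isBigO_zpow_zpow_atTop (by omega : p - 2 ≤ p - 1)) |>.add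
    ((isBigO_refl (fun x : ℝ => x ^ (p - 1)) atTop).const_mul_left b)
  rw [HasExpansion, add_sub_cancel_right, show p + 1 - 2 = p - 1 by ring]
  exact this.congr_left fun x => by ring

lemma mul (hf : HasExpansion f p a b) (hg : HasExpansion g q a' b') :
    HasExpansion (fun x => f x * g x) (p + q) (a * a') (a * b' + b * a') := by
  have hlead : (fun x : ℝ => a * x ^ p + b * x ^ (p - 1)) =O[atTop] fun x => x ^ p :=
    ((isBigO_refl _ _).const_mul_left a).add
      ((isBigO_zpow_zpow_atTop (by omega)).const_mul_left b)
  have h1 := ((isBigO_refl (fun x : ℝ => x ^ (p + q - 2)) atTop).const_mul_left (b * b'))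
  have h2 := hlead.mul_zpow hg
  have h3 := hf.mul_zpow hg.isBigO
  rw [show p + (q - 2) = p + q - 2 by ring] at h2
  rw [show p - 2 + q = p + q - 2 by ring] at h3
  refine ((h1.add h2).add h3).congr' ?_ (by rfl)
  filter_upwards [eventually_gt_atTop 0] with x hx
  have e1 : x ^ (p + q) = x ^ p * x ^ q := zpow_add₀ hx.ne' _ _
  have e2 : x ^ (p + q - 1) = x ^ p * x ^ (q - 1) := by
    rw [← zpow_add₀ hx.ne']; ring_nf
  have e3 : x ^ (p + q - 1) = x ^ (p - 1) * x ^ q := by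
    rw [← zpow_add₀ hx.ne']; ring_nf
  have e4 : x ^ (p + q - 2) = x ^ (p - 1) * x ^ (q - 1) := by
    rw [← zpow_add₀ hx.ne']; ring_nf
  linear_combination (a * a') * e1 + (a * b') * e2 + (b * a') * e3 + b * b' * e4

lemma isTheta (hf : HasExpansion f p a b) (ha : a ≠ 0) : f =Θ[atTop] fun x => x ^ p := by
  have hrem : (f - fun x => a * x ^ p) =O[atTop] fun x => x ^ (p - 1) :=
    ((hf.trans (isBigO_zpow_zpow_atTop (by omega))).add
      ((isBigO_refl _ _).const_mul_left b)).congr_left fun x => by simp only [Pi.sub_apply]; ring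
  have hequiv : f ~[atTop] fun x => a * x ^ p :=
    hrem.trans_isLittleO ((isLittleO_zpow_zpow_atTop (by omega)).trans_isBigO
      (isBigO_self_const_mul ha _ _))
  exact hequiv.isTheta.trans ((isTheta_refl _ _).const_mul_left ha)

lemma inv (hf : HasExpansion f p a b) (ha : a ≠ 0) :
    HasExpansion (fun x => (f x)⁻¹) (-p) a⁻¹ (-b / a ^ 2) := by
  have hΘ := hf.isTheta ha
  have hinv : (fun x => (f x)⁻¹) =O[atTop] fun x => x ^ (-p) :=
    hΘ.inv.isBigO.congr_right fun x => (zpow_neg x p).symm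
  have hG : (fun x : ℝ => a⁻¹ * x ^ (-p) + -b / a ^ 2 * x ^ (-p - 1)) =O[atTop]
      fun x => x ^ (-p) :=
    ((isBigO_refl _ _).const_mul_left _).add
      ((isBigO_zpow_zpow_atTop (by omega)).const_mul_left _)
  have hrG := hf.mul_zpow hG
  rw [show p - 2 + -p = -2 by ring] at hrG
  have hbound := hinv.mul_zpow
    (((isBigO_refl (fun x : ℝ => x ^ (-2 : ℤ)) atTop).const_mul_left ((b / a) ^ 2)).sub hrG)
  rw [show -p + -2 = -p - 2 by ring] at hbound
  refine hbound.congr' ?_ (by rfl)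
  filter_upwards [eventually_gt_atTop 0, hΘ.isBigO_symm.eq_zero_imp] with x hx hfx
  have hf0 : f x ≠ 0 := fun h0 => zpow_ne_zero p hx.ne' (hfx h0)
  -- `f⁻¹ - G = f⁻¹ (1 - f G)`, and the two-term part of `f` times `G` is `1 + O(x⁻²)`.
  have hEG : (a * x ^ p + b * x ^ (p - 1)) * (a⁻¹ * x ^ (-p) + -b / a ^ 2 * x ^ (-p - 1))
      = 1 - (b / a) ^ 2 * x ^ (-2 : ℤ) := by
    rw [zpow_sub_one₀ hx.ne', zpow_sub_one₀ hx.ne', zpow_neg, zpow_neg,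
      show (2 : ℤ) = ((2 : ℕ) : ℤ) by rfl, zpow_natCast]
    have := zpow_ne_zero p hx.ne'
    field_simp
    ring
  have hff : (f x)⁻¹ * f x = 1 := inv_mul_cancel₀ hf0
  generalize a * x ^ p + b * x ^ (p - 1) = E at hEG ⊢
  generalize a⁻¹ * x ^ (-p) + -b / a ^ 2 * x ^ (-p - 1) = G at hEG ⊢
  linear_combination (f x)⁻¹ * hEG - G * hff

lemma prod {ι : Type*} (s : Finset ι) {f : ι → ℝ → ℝ} {p : ι → ℤ} {b : ι → ℝ}
    (hf : ∀ i ∈ s, HasExpansion (f i) (p i) 1 (b i)) :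
    HasExpansion (fun x => ∏ i ∈ s, f i x) (∑ i ∈ s, p i) 1 (∑ i ∈ s, b i) := by
  classical
  induction s using Finset.induction_on with
  | empty => simpa using hasExpansion_const 1
  | insert i s hi ih =>
    simp only [Finset.prod_insert hi, Finset.sum_insert hi]
    exact ((hf i (Finset.mem_insert_self i s)).mul
      (ih fun j hj => hf j (Finset.mem_insert_of_mem hj))).congr_coeff rfl (by ring) (by ring)

end HasExpansion

lemma hasExpansion_add_const_zpow (σ : ℝ) (p : ℤ) :
    HasExpansion (fun x => (x + σ) ^ p) p 1 (p * σ) := by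
  have hpow (n : ℕ) : HasExpansion (fun x => (x + σ) ^ (n : ℤ)) n 1 (n * σ) := by
    simpa using HasExpansion.prod (Finset.range n) fun _ _ => hasExpansion_add_const σ
  cases p with
  | ofNat n => simpa using hpow n
  | negSucc n =>
    have := (hpow (n + 1)).inv one_ne_zero
    rw [Int.negSucc_eq]
    push_cast at this ⊢
    exact (this.congr_left fun x => by rw [zpow_neg]).congr_coeff rfl (by simp) (by ring)

namespace HasExpansion

variable {f : ℝ → ℝ} {p : ℤ} {a b : ℝ}

lemma comp_add (hf : HasExpansion f p a b) (σ : ℝ) :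
    HasExpansion (fun x => f (x + σ)) p a (b + a * p * σ) := by
  have hrem : (fun x => f (x + σ) - (a * (x + σ) ^ p + b * (x + σ) ^ (p - 1))) =O[atTop]
      fun x => x ^ (p - 2) :=
    (hf.comp_tendsto (tendsto_atTop_add_const_right _ σ tendsto_id)).trans
      (hasExpansion_add_const_zpow σ (p - 2)).isBigO
  have hlow := ((hasExpansion_add_const_zpow σ (p - 1)).const_mul b).lift
  rw [sub_add_cancel] at hlow
  exact (((hasExpansion_add_const_zpow σ p).const_mul a).add hlow |>.add
    (hasExpansion_zero_zero_iff.2 hrem)).congr_left (fun x => by ring)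
    |>.congr_coeff rfl (by ring) (by ring)

end HasExpansion

/-- Only large `k` matter for Hilbert–Schmidt sums; this is also what lets `Int.toNat` stand for
the exponent `k + σ` when `σ < 0`. -/
def IsShift (T : E) (σ : ℤ) (c : ℝ → ℝ) : Prop :=
  ∀ᶠ k : ℕ in atTop, T (X ^ k) = (c k : ℂ) • X ^ ((k : ℤ) + σ).toNat

lemma tendsto_toNat_natCast_add_atTop (τ : ℤ) :
    Tendsto (fun k : ℕ => ((k : ℤ) + τ).toNat) atTop atTop :=
  tendsto_atTop_atTop.2 fun N => ⟨N + τ.natAbs, fun k hk => by omega⟩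

namespace IsShift

variable {A B : E} {σ τ : ℤ} {α β : ℝ → ℝ}

lemma mul (hA : IsShift A σ α) (hB : IsShift B τ β) :
    IsShift (A * B) (σ + τ) (fun x => α (x + τ) * β x) := by
  filter_upwards [hB, (tendsto_toNat_natCast_add_atTop τ).eventually hA,
    eventually_ge_atTop τ.natAbs] with k hBk hAk hk
  have hj : (((k : ℤ) + τ).toNat : ℤ) = k + τ := Int.toNat_of_nonneg (by omega)
  have hjR : ((((k : ℤ) + τ).toNat : ℕ) : ℝ) = k + τ := by exact_mod_cast hj
  rw [Module.End.mul_apply, hBk, map_smul, hAk, smul_smul, hj, hjR, add_assoc, add_comm τ σ]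
  push_cast
  ring_nf

lemma add (hA : IsShift A σ α) (hB : IsShift B σ β) :
    IsShift (A + B) σ (fun x => α x + β x) := by
  filter_upwards [hA, hB] with k hAk hBk
  rw [LinearMap.add_apply, hAk, hBk, ← add_smul]
  push_cast
  rfl

lemma sub (hA : IsShift A σ α) (hB : IsShift B σ β) :
    IsShift (A - B) σ (fun x => α x - β x) := by
  filter_upwards [hA, hB] with k hAk hBk
  rw [LinearMap.sub_apply, hAk, hBk, ← sub_smul]
  push_cast
  rfl

lemma smul (hA : IsShift A σ α) (r : ℝ) :
    IsShift ((r : ℂ) • A) σ (fun x => r * α x) := by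
  filter_upwards [hA] with k hAk
  rw [LinearMap.smul_apply, hAk, smul_smul]
  push_cast
  rfl

end IsShift

def IsMonicShift (T : E) (σ p : ℤ) : Prop :=
  ∃ c b, IsShift T σ c ∧ HasExpansion c p 1 b

lemma isMonicShift_one : IsMonicShift 1 0 0 :=
  ⟨fun _ => 1, 0, Eventually.of_forall fun k => by simp, hasExpansion_const 1⟩

namespace IsMonicShift

variable {A B : E} {σ τ p q : ℤ}

lemma mul (hA : IsMonicShift A σ p) (hB : IsMonicShift B τ q) :
    IsMonicShift (A * B) (σ + τ) (p + q) := by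
  obtain ⟨α, a, hAs, hAe⟩ := hA
  obtain ⟨β, b, hBs, hBe⟩ := hB
  exact ⟨_, _, hAs.mul hBs, ((hAe.comp_add τ).mul hBe).congr_coeff rfl (one_mul 1) rfl⟩

lemma pow (hA : IsMonicShift A σ p) (n : ℕ) : IsMonicShift (A ^ n) (n * σ) (n * p) := by
  induction n with
  | zero => simpa using isMonicShift_one
  | succ n ih =>
    rw [pow_succ]
    convert ih.mul hA using 1 <;> push_cast <;> ring

lemma add_smul (hA : IsMonicShift A σ p) (hB : IsMonicShift B σ (p - 1)) (r : ℝ) :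
    IsMonicShift (A + (r : ℂ) • B) σ p := by
  obtain ⟨α, a, hAs, hAe⟩ := hA
  obtain ⟨β, b, hBs, hBe⟩ := hB
  have hlow := (hBe.const_mul r).lift
  rw [sub_add_cancel] at hlow
  exact ⟨_, _, hAs.add (hBs.smul r), (hAe.add hlow).congr_coeff rfl (add_zero 1) rfl⟩

lemma opComm (hA : IsMonicShift A σ p) (hB : IsMonicShift B τ q) :
    ∃ c, IsShift (opComm A B) (σ + τ) c ∧ HasExpansion c (p + q) 0 (p * τ - q * σ) := by
  obtain ⟨α, a, hAs, hAe⟩ := hA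
  obtain ⟨β, b, hBs, hBe⟩ := hB
  have hBA := hBs.mul hAs
  rw [add_comm τ σ] at hBA
  refine ⟨_, (hAs.mul hBs).sub hBA, ?_⟩
  have hBAe := (hBe.comp_add σ).mul hAe
  rw [add_comm q p] at hBAe
  exact (((hAe.comp_add τ).mul hBe).sub hBAe).congr_coeff rfl (by ring) (by ring)

end IsMonicShift

lemma w_succ (h : ℝ) (n : ℕ) : w h (n + 1) = w h n * ((n + 1) * (n + 2 * h)) := by
  unfold w
  rw [Nat.factorial_succ, Finset.prod_range_succ]
  push_cast
  ring

lemma w_add (h : ℝ) (j d : ℕ) :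
    w h (j + d) = w h j * ∏ i ∈ Finset.range d, ((j + (1 + i)) * (j + (2 * h + i))) := by
  induction d with
  | zero => simp
  | succ d ih =>
    rw [← add_assoc, w_succ, ih, Finset.prod_range_succ]
    push_cast
    ring

lemma hasExpansion_weight_ratio (h : ℝ) (d : ℕ) : ∃ b, HasExpansion
    (fun x => ∏ i ∈ Finset.range d, ((x + (1 + i)) * (x + (2 * h + i)))) (2 * d) 1 b :=
  ⟨_, (HasExpansion.prod _ fun i _ => ((hasExpansion_add_const _).mul
    (hasExpansion_add_const _)).congr_coeff rfl (one_mul 1) rfl).congr_coeff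
    (by simp [mul_comm]) rfl rfl⟩

lemma isBigO_weight_ratio (h : ℝ) (σ : ℤ) :
    (fun k : ℕ => w h ((k : ℤ) + σ).toNat / w h k) =O[atTop] fun k : ℕ => (k : ℝ) ^ (2 * σ) := by
  obtain ⟨d, rfl | rfl⟩ := Int.eq_nat_or_neg σ
  · obtain ⟨b, hP⟩ := hasExpansion_weight_ratio h d
    refine IsBigO.trans (IsBigO.of_bound' (Eventually.of_forall fun k => ?_))
      (hP.isBigO.comp_tendsto tendsto_natCast_atTop_atTop)
    simp only [Function.comp_apply, show ((k : ℤ) + d).toNat = k + d by omega, w_add]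
    rcases eq_or_ne (w h k) 0 with hw | hw
    · simp only [hw, zero_mul, zero_div, norm_zero]
      exact norm_nonneg _
    · rw [mul_div_cancel_left₀ _ hw]
  · obtain ⟨b, hP⟩ := hasExpansion_weight_ratio h d
    have hPinv := ((hP.comp_add (-d)).inv one_ne_zero).isBigO.comp_tendsto
      tendsto_natCast_atTop_atTop
    rw [show -(2 * (d : ℤ)) = 2 * -(d : ℤ) by ring] at hPinv
    refine IsBigO.trans (IsBigO.of_bound' ?_) hPinv
    filter_upwards [eventually_ge_atTop d] with k hk
    obtain ⟨j, rfl⟩ := Nat.exists_eq_add_of_le' hk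
    simp only [Function.comp_apply, show ((j + d : ℕ) + -(d : ℤ)).toNat = j by omega, w_add]
    push_cast
    simp only [add_neg_cancel_right]
    rcases eq_or_ne (w h j) 0 with hw | hw
    · simp only [hw, zero_div, norm_zero]
      exact norm_nonneg _
    · rw [div_mul_cancel_left₀ hw]

lemma summable_of_isShift {h : ℝ} {B : Polynomial ℂ → Polynomial ℂ → ℂ}
    (hB_smull : ∀ (a : ℂ) (p q : Polynomial ℂ), B (a • p) q = a * B p q)
    (hB_smulr : ∀ (a : ℂ) (p q : Polynomial ℂ), B p (a • q) = (starRingEnd ℂ) a * B p q)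
    (hB_diag : ∀ n : ℕ, B (X ^ n) (X ^ n) = ((w h n : ℝ) : ℂ))
    {T : E} {σ : ℤ} {c : ℝ → ℝ} (hT : IsShift T σ c)
    (hc : c =O[atTop] fun x => x ^ (-σ - 1)) :
    Summable fun k : ℕ => (B (T (X ^ k)) (T (X ^ k))).re / (B (X ^ k) (X ^ k)).re := by
  have hsummand : (fun k : ℕ => c k * c k * (w h ((k : ℤ) + σ).toNat / w h k)) =ᶠ[atTop]
      fun k : ℕ => (B (T (X ^ k)) (T (X ^ k))).re / (B (X ^ k) (X ^ k)).re := by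
    filter_upwards [hT] with k hk
    rw [hk, hB_smull, hB_smulr, hB_diag, hB_diag, Complex.conj_ofReal, ← Complex.ofReal_mul,
      ← Complex.ofReal_mul, Complex.ofReal_re, Complex.ofReal_re]
    ring
  have hc' := hc.comp_tendsto tendsto_natCast_atTop_atTop
  have hbound := (hc'.mul hc').mul (isBigO_weight_ratio h σ)
  have hsq : Summable fun k : ℕ => (k : ℝ) ^ (-2 : ℤ) := by
    simp [zpow_neg]
  refine summable_of_isBigO_nat' hsq (hbound.congr' hsummand ?_)
  filter_upwards [eventually_ge_atTop 1] with k hk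
  have hk0 : (k : ℝ) ≠ 0 := by positivity
  simp only [Function.comp_apply]
  rw [← zpow_add₀ hk0, ← zpow_add₀ hk0]
  ring_nf

lemma isMonicShift_Dop : IsMonicShift Dop (-1) 1 := by
  refine ⟨fun x => x, 0, Eventually.of_forall fun k => ?_,
    (hasExpansion_add_const 0).congr_left add_zero⟩
  rw [Dop, derivative_X_pow, C_mul', show ((k : ℤ) + -1).toNat = k - 1 by omega]
  simp

lemma isMonicShift_Mz : IsMonicShift Mz 1 0 := by
  refine ⟨fun _ => 1, 0, Eventually.of_forall fun k => ?_, hasExpansion_const 1⟩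
  simp [Mz, pow_succ', show ((k : ℤ) + 1).toNat = k + 1 by omega]

lemma isMonicShift_F {h : ℝ} {F : E}
    (hF : ∀ n : ℕ, F (X ^ n) = (((n : ℂ) + 2 * h)⁻¹) • X ^ (n + 1)) :
    IsMonicShift F 1 (-1) := by
  refine ⟨fun x => (x + 2 * h)⁻¹, _, Eventually.of_forall fun k => ?_,
    ((hasExpansion_add_const (2 * h)).inv one_ne_zero).congr_coeff rfl inv_one rfl⟩
  rw [hF, show ((k : ℤ) + 1).toNat = k + 1 by omega]
  push_cast
  rfl

lemma isMonicShift_J {h : ℝ} {F : E}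
    (hF : ∀ n : ℕ, F (X ^ n) = (((n : ℂ) + 2 * h)⁻¹) • X ^ (n + 1))
    {J : ℤ → E} (hJ0 : J 0 = 1)
    (hJpos : ∀ m : ℕ, 1 ≤ m → J (m : ℤ) = Dop ^ m)
    (hJneg : ∀ m : ℕ, 1 ≤ m → J (-(m : ℤ)) = F ^ m) (m : ℤ) :
    IsMonicShift (J m) (-m) m := by
  obtain ⟨c, rfl | rfl⟩ := Int.eq_nat_or_neg m
  · rcases Nat.eq_zero_or_pos c with rfl | hc
    · simpa [hJ0] using isMonicShift_one
    · rw [hJpos c hc]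
      convert isMonicShift_Dop.pow c using 1 <;> ring
  · rcases Nat.eq_zero_or_pos c with rfl | hc
    · simpa [hJ0] using isMonicShift_one
    · rw [hJneg c hc]
      convert (isMonicShift_F hF).pow c using 1 <;> ring

lemma isMonicShift_L {h : ℝ} {L : ℤ → E}
    (hLpos : ∀ k : ℕ, L (k : ℤ) = Mz * Dop ^ (k + 1) + (((k : ℂ) + 1) * (h : ℂ)) • Dop ^ k)
    (hLneg : ∀ k : ℕ, 1 ≤ k → ∀ n : ℕ,
      L (-(k : ℤ)) (X ^ n) =
        (((n : ℂ) + ((k : ℂ) + 1) * (h : ℂ)) /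
            ∏ i ∈ Finset.range k, ((n : ℂ) + 2 * h + (i : ℂ))) • X ^ (n + k))
    (n : ℤ) : IsMonicShift (L n) (-n) (n + 1) := by
  cases n with
  | ofNat c =>
    rw [Int.ofNat_eq_natCast, hLpos c,
      show ((c : ℂ) + 1) * (h : ℂ) = (((c + 1) * h : ℝ) : ℂ) by push_cast; ring]
    have hlead := isMonicShift_Mz.mul (isMonicShift_Dop.pow (c + 1))
    have hlow := isMonicShift_Dop.pow c
    push_cast at hlead hlow
    convert hlead.add_smul (by convert hlow using 1 <;> ring) _ using 1 <;> ring
  | negSucc c =>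
    have hL := hLneg (c + 1) (by omega)
    rw [Int.negSucc_eq]
    push_cast at hL
    refine ⟨fun x => (x + ((c + 1 + 1) * h)) *
        (∏ i ∈ Finset.range (c + 1), (x + (2 * h + i)))⁻¹, _,
      Eventually.of_forall fun k => ?_,
      ((hasExpansion_add_const _).mul ((HasExpansion.prod (Finset.range (c + 1)) fun i _ =>
        hasExpansion_add_const (2 * h + (i : ℝ))).inv one_ne_zero)).congr_coeff ?_ ?_ rfl⟩
    · rw [hL k, show ((k : ℤ) + -(-((c : ℤ) + 1))).toNat = k + (c + 1) by omega, div_eq_mul_inv]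
      push_cast
      simp only [add_assoc]
    all_goals simp

theorem stmt_13_general (h : ℝ)
    (F : E) (hF : ∀ n : ℕ, F (X ^ n) = (((n : ℂ) + 2 * h)⁻¹) • X ^ (n + 1))
    (J : ℤ → E)
    (hJ0 : J 0 = 1)
    (hJpos : ∀ m : ℕ, 1 ≤ m → J (m : ℤ) = Dop ^ m)
    (hJneg : ∀ m : ℕ, 1 ≤ m → J (-(m : ℤ)) = F ^ m)
    (L : ℤ → E)
    (hLpos : ∀ k : ℕ, L (k : ℤ) = Mz * Dop ^ (k + 1) + (((k : ℂ) + 1) * (h : ℂ)) • Dop ^ k)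
    (hLneg : ∀ k : ℕ, 1 ≤ k → ∀ n : ℕ,
      L (-(k : ℤ)) (X ^ n) =
        (((n : ℂ) + ((k : ℂ) + 1) * (h : ℂ)) /
            ∏ i ∈ Finset.range k, ((n : ℂ) + 2 * h + (i : ℂ))) • X ^ (n + k))
    (B : Polynomial ℂ → Polynomial ℂ → ℂ)
    (hB_smull : ∀ (a : ℂ) (p q : Polynomial ℂ), B (a • p) q = a * B p q)
    (hB_smulr : ∀ (a : ℂ) (p q : Polynomial ℂ), B p (a • q) = (starRingEnd ℂ) a * B p q)
    (hB_diag : ∀ n : ℕ, B (X ^ n) (X ^ n) = ((w h n : ℝ) : ℂ))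
    :
    ∀ n m : ℤ,
      Summable (fun k : ℕ =>
        (B ((opComm (J n) (J m)) (X ^ k)) ((opComm (J n) (J m)) (X ^ k))).re /
          (B (X ^ k) (X ^ k)).re) ∧
      Summable (fun k : ℕ =>
        (B ((opComm (L n) (J m) + (m : ℂ) • J (n + m)) (X ^ k))
           ((opComm (L n) (J m) + (m : ℂ) • J (n + m)) (X ^ k))).re /
          (B (X ^ k) (X ^ k)).re) := by
  have hJ := isMonicShift_J hF hJ0 hJpos hJneg
  have hL := isMonicShift_L hLpos hLneg
  intro n m
  constructor
  · obtain ⟨c, hshift, hexp⟩ := (hJ n).opComm (hJ m)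
    refine summable_of_isShift hB_smull hB_smulr hB_diag hshift ?_
    have hc := hasExpansion_zero_zero_iff.1 (hexp.congr_coeff rfl rfl (by push_cast; ring))
    exact hc.trans (isBigO_zpow_zpow_atTop (by omega))
  · obtain ⟨c, hshift, hexp⟩ := (hL n).opComm (hJ m)
    obtain ⟨j, b, hjshift, hjexp⟩ := hJ (n + m)
    have hjsmul := hjshift.smul m
    rw [neg_add, Complex.ofReal_intCast] at hjsmul
    refine summable_of_isShift hB_smull hB_smulr hB_diag (hshift.add hjsmul) ?_
    have hlow := (hjexp.const_mul m).lift
    rw [show n + m + 1 = n + 1 + m by ring] at hlow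
    have hc := hasExpansion_zero_zero_iff.1
      ((hexp.add hlow).congr_coeff rfl (by ring) (by push_cast; ring))
    exact hc.trans (isBigO_zpow_zpow_atTop (by omega))

/-- For `h > 0`, adjoining the tensor operators `Jₘ` to the q_R-conformal
symmetries gives an HS-projective representation of the semidirect sum of the Witt algebra
with the ℤ-graded Heisenberg algebra: for all `n, m ∈ ℤ`, both defect operators
`[Jₙ, Jₘ]` and `[Lₙ, Jₘ] + m·J_{n+m}` are Hilbert–Schmidt w.r.t. the orthogonal monomial
basis. -/
theorem stmt_13 (h : ℝ) (hpos : 0 < h)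
    (F : E) (hF : ∀ n : ℕ, F (X ^ n) = (((n : ℂ) + 2 * h)⁻¹) • X ^ (n + 1))
    (J : ℤ → E)
    (hJ0 : J 0 = 1)
    (hJpos : ∀ m : ℕ, 1 ≤ m → J (m : ℤ) = Dop ^ m)
    (hJneg : ∀ m : ℕ, 1 ≤ m → J (-(m : ℤ)) = F ^ m)
    (L : ℤ → E)
    (hLpos : ∀ k : ℕ, L (k : ℤ) = Mz * Dop ^ (k + 1) + (((k : ℂ) + 1) * (h : ℂ)) • Dop ^ k)
    (hLneg : ∀ k : ℕ, 1 ≤ k → ∀ n : ℕ,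
      L (-(k : ℤ)) (X ^ n) =
        (((n : ℂ) + ((k : ℂ) + 1) * (h : ℂ)) /
            ∏ i ∈ Finset.range k, ((n : ℂ) + 2 * h + (i : ℂ))) • X ^ (n + k))
    (B : Polynomial ℂ → Polynomial ℂ → ℂ)
    (hB_addl : ∀ p q r : Polynomial ℂ, B (p + q) r = B p r + B q r)
    (hB_smull : ∀ (a : ℂ) (p q : Polynomial ℂ), B (a • p) q = a * B p q)
    (hB_addr : ∀ p q r : Polynomial ℂ, B p (q + r) = B p q + B p r)
    (hB_smulr : ∀ (a : ℂ) (p q : Polynomial ℂ), B p (a • q) = (starRingEnd ℂ) a * B p q)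
    (hB_orth : ∀ m n : ℕ, m ≠ n → B (X ^ m) (X ^ n) = 0)
    (hB_diag : ∀ n : ℕ, B (X ^ n) (X ^ n) = ((w h n : ℝ) : ℂ))
    :
    ∀ n m : ℤ,
      Summable (fun k : ℕ =>
        (B ((opComm (J n) (J m)) (X ^ k)) ((opComm (J n) (J m)) (X ^ k))).re /
          (B (X ^ k) (X ^ k)).re) ∧
      Summable (fun k : ℕ =>
        (B ((opComm (L n) (J m) + (m : ℂ) • J (n + m)) (X ^ k))
           ((opComm (L n) (J m) + (m : ℂ) • J (n + m)) (X ^ k))).re /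
          (B (X ^ k) (X ^ k)).re) :=
  stmt_13_general h F hF J hJ0 hJpos hJneg L hLpos hLneg B hB_smull hB_smulr hB_diag

end
end
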